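/- Let γ = ((i₁ j₁),…,(i_k j_k)) ∈ Σ*_n(k) and let l ∈ {1,…,k}. Then j_l is the minimum of the intersection of {i_l+1, i_l+2, …, n} with the support of γ_l, i.e. j_l = min{x ∈ supp(γ_l) : x > i_l}. -/

import Mathlib

/-- ℓ(σ): the number of cycles (orbits) of σ, including fixed points, counted via the
minimal representative of each orbit. -/
noncomputable def cycleCount {n : ℕ} (σ : Equiv.Perm (Fin n)) : ℕ :=
  Set.ncard {x : Fin n | ∀ y, σ.SameCycle x y → x ≤ y}

/-- |σ| := n − ℓ(σ). -/
noncomputable def normPerm {n : ℕ} (σ : Equiv.Perm (Fin n)) : ℕ := n - cycleCount σ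

/-- σ₁ ≼ σ₂ iff |σ₂| = |σ₁| + |σ₁⁻¹σ₂|. -/
def precLe {n : ℕ} (σ₁ σ₂ : Equiv.Perm (Fin n)) : Prop :=
  normPerm σ₂ = normPerm σ₁ + normPerm (σ₁⁻¹ * σ₂)

/-- Σ_n(k): tuples of k transpositions with |τ₁⋯τ_k| = k and τ₁⋯τ_k ≼ (1 … n). -/
def SigmaSet (n k : ℕ) : Set (Fin k → Equiv.Perm (Fin n)) :=
  {τ | (∀ l, (τ l).IsSwap) ∧ normPerm (List.ofFn τ).prod = k ∧
      precLe (List.ofFn τ).prod (finRotate n)}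

/-- γ_m := τ₁∘⋯∘τ_m, the product of the first m entries of the chain. -/
def gammaP {n k : ℕ} (τ : Fin k → Equiv.Perm (Fin n)) (m : ℕ) : Equiv.Perm (Fin n) :=
  ((List.ofFn τ).take m).prod

/-!
Cycles are counted by their minimal elements, so multiplying by a transposition `(a b)` that
merges two cycles lowers the count by exactly one; this gives the triangle inequality for `|·|`,
shows that every prefix `γ_m` of the chain satisfies `|γ_m| = m` and `γ_m ≼ c`, and that each
step `γ_m = γ_{m-1} (i_m j_m)` merges two cycles of `γ_{m-1}`. Descending from `c` one split at a
time, every `σ ≼ c` has increasing, noncrossing cycles.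

Now let `δ = γ_{l-1}` and `γ = γ_l = δ (i_l j_l)`. Then `γ j_l = δ i_l ≠ j_l`. A point of
`supp γ` above `i_l` is some `j_t` with `t ≤ l` (the `i_t` lie below `i_l`), and `i_t ≤ i_l`. If
`i_l < j_t < j_l`, then either `i_t` and `i_l` lie in different cycles of `γ`, and the chords
`(i_t, j_t)`, `(i_l, j_l)` cross, or they lie in one cycle, and then `δ j_l = γ i_l ∈ (i_l, j_l)`
is the minimum of its `δ`-cycle, although the nontrivial cycles of `δ` have their minima among
`i_1, …, i_{l-1} ≤ i_l`.
-/

open Equiv Equiv.Perm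

section MinReps

variable {α : Type*} {r : α → α → Prop}

def mergeRel (r : α → α → Prop) (a b : α) (x y : α) : Prop :=
  r x y ∨ ((r x a ∨ r x b) ∧ (r y a ∨ r y b))

theorem mergeRel_comm (r : α → α → Prop) (a b : α) : mergeRel r a b = mergeRel r b a := by
  funext x y
  simp only [mergeRel, or_comm (a := r x a), or_comm (a := r y a)]

theorem mergeRel_congr (hr : Equivalence r) {a a' b b' : α} (ha : r a a') (hb : r b b') :
    mergeRel r a b = mergeRel r a' b' := by
  have hiff : ∀ {z c c'}, r c c' → (r z c ↔ r z c') :=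
    fun h => ⟨fun h' => hr.trans h' h, fun h' => hr.trans h' (hr.symm h)⟩
  funext x y
  simp only [mergeRel, hiff ha, hiff hb]

variable [LinearOrder α]

def minReps (r : α → α → Prop) : Set α := {x | ∀ y, r x y → x ≤ y}

theorem exists_mem_minReps_rel [Finite α] (hr : Equivalence r) (x : α) :
    ∃ m ∈ minReps r, r x m := by
  obtain ⟨m, hxm, hmin⟩ := Set.exists_min_image {y | r x y} id (Set.toFinite _) ⟨x, hr.refl x⟩
  exact ⟨m, fun y hmy => hmin y (hr.trans hxm hmy), hxm⟩

theorem eq_of_mem_minReps (hr : Equivalence r) {x y : α} (hx : x ∈ minReps r)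
    (hy : y ∈ minReps r) (hxy : r x y) : x = y :=
  le_antisymm (hx y hxy) (hy x (hr.symm hxy))

theorem minReps_mergeRel_of_lt (hr : Equivalence r) {a b : α} (ha : a ∈ minReps r)
    (hb : b ∈ minReps r) (hab : a < b) : minReps (mergeRel r a b) = minReps r \ {b} := by
  ext x
  refine ⟨fun hx => ⟨fun y hxy => hx y (Or.inl hxy), ?_⟩, fun ⟨hx, hxb⟩ y hxy => ?_⟩
  · rintro rfl
    exact hab.not_ge (hx a (Or.inr ⟨Or.inr (hr.refl x), Or.inl (hr.refl a)⟩))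
  · rcases hxy with hxy | ⟨hxa | hxb', hya | hyb⟩
    · exact hx y hxy
    all_goals first
      | exact absurd (eq_of_mem_minReps hr hx hb ‹_›) hxb
      | rw [eq_of_mem_minReps hr hx ha hxa]
    · exact ha y (hr.symm hya)
    · exact hab.le.trans (hb y (hr.symm hyb))

theorem ncard_minReps_mergeRel [Finite α] (hr : Equivalence r) {a b : α} (hab : ¬ r a b) :
    (minReps (mergeRel r a b)).ncard + 1 = (minReps r).ncard := by
  obtain ⟨a', ha', haa'⟩ := exists_mem_minReps_rel hr a
  obtain ⟨b', hb', hbb'⟩ := exists_mem_minReps_rel hr b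
  rw [mergeRel_congr hr haa' hbb']
  rcases lt_trichotomy a' b' with h | rfl | h
  · rw [minReps_mergeRel_of_lt hr ha' hb' h]
    exact Set.ncard_sdiff_singleton_add_one hb'
  · exact absurd (hr.trans haa' (hr.symm hbb')) hab
  · rw [mergeRel_comm, minReps_mergeRel_of_lt hr hb' ha' h]
    exact Set.ncard_sdiff_singleton_add_one ha'

end MinReps

namespace Equiv.Perm

variable {α : Type*} {σ : Perm α} {a b x y : α}

theorem SameCycle.mem_of_mapsTo [Finite α] {s : Set α} (hs : Set.MapsTo σ s s) (hx : x ∈ s)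
    (h : σ.SameCycle x y) : y ∈ s := by
  obtain ⟨i, -, rfl⟩ := h.exists_pow_eq'
  rw [coe_pow]
  exact hs.iterate i hx

theorem exists_mem_apply_ne_of_list_prod_apply_ne {L : List (Perm α)} (h : L.prod x ≠ x) :
    ∃ τ ∈ L, τ x ≠ x := by
  induction L with
  | nil => exact absurd rfl h
  | cons ρ L ih =>
    by_cases hL : L.prod x = x
    · exact ⟨ρ, List.mem_cons_self, by simpa [hL] using h⟩
    · obtain ⟨τ, hτ, hτx⟩ := ih hL
      exact ⟨τ, List.mem_cons_of_mem ρ hτ, hτx⟩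

variable [DecidableEq α]

theorem SameCycle.swap_apply_right (hab : σ.SameCycle a b) (z : α) :
    σ.SameCycle z (swap a b z) := by
  rw [swap_apply_def]
  split_ifs with hza hzb
  · exact hza ▸ hab
  · exact hzb ▸ hab.symm
  · exact SameCycle.rfl

theorem SameCycle.of_mul_swap [Finite α] (hab : σ.SameCycle a b)
    (h : (σ * swap a b).SameCycle x y) : σ.SameCycle x y :=
  h.mem_of_mapsTo (s := {z | σ.SameCycle x z})
    (fun z hz => show σ.SameCycle x (σ (swap a b z)) from
      sameCycle_apply_right.mpr (hz.trans (hab.swap_apply_right z))) SameCycle.rfl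

theorem sameCycle_mul_swap [Finite α] (hab : ¬σ.SameCycle a b) :
    (σ * swap a b).SameCycle a b := by
  set π := σ * swap a b
  have hπa : π a = σ b := by simp [π]
  -- on the `σ`-cycle of `b`, which avoids `a`, the map `π` agrees with `σ` except at `b`
  have hmaps : Set.MapsTo σ {z | σ.SameCycle b z → π.SameCycle a (σ z)}
      {z | σ.SameCycle b z → π.SameCycle a (σ z)} := by
    intro z hz hbz
    have hbz' := sameCycle_apply_right.mp hbz
    by_cases hzb : σ z = b
    · rw [hzb, ← hπa]
      exact SameCycle.rfl.apply_right
    · have hza : σ z ≠ a := fun h => hab (h ▸ hbz).symm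
      have : π (σ z) = σ (σ z) := by simp [π, swap_apply_of_ne_of_ne hza hzb]
      exact this ▸ (hz hbz').apply_right
  have hb : σ.SameCycle b (σ.symm b) := sameCycle_symm_apply_right.mpr .rfl
  simpa using SameCycle.mem_of_mapsTo hmaps (fun _ => hπa ▸ SameCycle.rfl.apply_right) hb hb

theorem sameCycle_mul_swap_iff [Finite α] (hab : ¬σ.SameCycle a b) :
    (σ * swap a b).SameCycle x y ↔ mergeRel σ.SameCycle a b x y := by
  set π := σ * swap a b
  constructor
  · intro h
    refine h.mem_of_mapsTo (s := {z | mergeRel σ.SameCycle a b x z}) (fun z hz => ?_) (Or.inl .rfl)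
    simp only [Set.mem_ofPred_eq, mergeRel] at hz ⊢
    rw [show π z = σ (swap a b z) from rfl, swap_apply_def]
    split_ifs with hza hzb
    · subst hza
      exact .inr ⟨hz.elim .inl And.left, .inr (sameCycle_apply_left.mpr .rfl)⟩
    · subst hzb
      exact .inr ⟨hz.elim .inr And.left, .inl (sameCycle_apply_left.mpr .rfl)⟩
    · simpa only [sameCycle_apply_right, sameCycle_apply_left] using hz
  · have hπ : π.SameCycle a b := sameCycle_mul_swap hab
    have hπσ : ∀ {u v}, σ.SameCycle u v → π.SameCycle u v := fun h =>
      SameCycle.of_mul_swap hπ (by rwa [mul_swap_mul_self])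
    rintro (h | ⟨hx, hy⟩)
    · exact hπσ h
    · have hab' : ∀ {u}, σ.SameCycle u a ∨ σ.SameCycle u b → π.SameCycle u a := by
        rintro u (h | h)
        · exact hπσ h
        · exact (hπσ h).trans hπ.symm
      exact (hab' hx).trans (hab' hy).symm

end Equiv.Perm

section Norm

variable {n : ℕ} {σ τ : Perm (Fin n)} {a b : Fin n}

theorem cycleCount_le (σ : Perm (Fin n)) : cycleCount σ ≤ n :=
  (Set.ncard_le_card _).trans_eq (Nat.card_eq_fintype_card.trans (Fintype.card_fin n))

theorem cycleCount_mul_swap_add_one (hab : ¬σ.SameCycle a b) :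
    cycleCount (σ * swap a b) + 1 = cycleCount σ := by
  have hrel : (σ * swap a b).SameCycle = mergeRel σ.SameCycle a b := by
    funext x y
    exact propext (sameCycle_mul_swap_iff hab)
  show (minReps _).ncard + 1 = (minReps _).ncard
  rw [hrel]
  exact ncard_minReps_mergeRel (SameCycle.equivalence σ) hab

theorem normPerm_one : normPerm (1 : Perm (Fin n)) = 0 := by
  have : minReps (SameCycle (1 : Perm (Fin n))) = Set.univ :=
    Set.eq_univ_of_forall fun x y hxy => (sameCycle_one.mp hxy).le
  rw [normPerm, cycleCount, show {x | _} = minReps _ from rfl, this, Set.ncard_univ]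
  simp

theorem normPerm_mul_swap_of_not_sameCycle (hab : ¬σ.SameCycle a b) :
    normPerm (σ * swap a b) = normPerm σ + 1 := by
  have := cycleCount_mul_swap_add_one hab
  have := cycleCount_le σ
  unfold normPerm
  omega

theorem normPerm_mul_swap_le_of_sameCycle (hab : σ.SameCycle a b) :
    normPerm (σ * swap a b) ≤ normPerm σ := by
  by_cases hπ : (σ * swap a b).SameCycle a b
  · have hrel : (σ * swap a b).SameCycle = σ.SameCycle := by
      funext x y
      refine propext ⟨hab.of_mul_swap, fun h => ?_⟩
      exact SameCycle.of_mul_swap hπ (by rwa [mul_swap_mul_self])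
    rw [normPerm, normPerm, cycleCount, cycleCount, hrel]
  · have := normPerm_mul_swap_of_not_sameCycle hπ
    rw [mul_swap_mul_self] at this
    omega

theorem normPerm_mul_swap_le (σ : Perm (Fin n)) (a b : Fin n) :
    normPerm (σ * swap a b) ≤ normPerm σ + 1 := by
  by_cases hab : σ.SameCycle a b
  · exact (normPerm_mul_swap_le_of_sameCycle hab).trans (Nat.le_succ _)
  · exact (normPerm_mul_swap_of_not_sameCycle hab).le

theorem exists_normPerm_swap_mul_add_one (hσ : σ ≠ 1) :
    ∃ a b : Fin n, normPerm (swap a b * σ) + 1 = normPerm σ := by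
  obtain ⟨x, hx⟩ : ∃ x, σ x ≠ x := by
    by_contra! h
    exact hσ (Equiv.ext h)
  refine ⟨σ x, σ (σ x), ?_⟩
  rw [swap_apply_apply, inv_mul_cancel_right]
  have hfix : (σ * swap x (σ x)) (σ x) = σ x := by simp
  have hsplit : ¬(σ * swap x (σ x)).SameCycle x (σ x) := fun h => hx (h.eq_of_right hfix).symm
  have := normPerm_mul_swap_of_not_sameCycle hsplit
  rw [mul_swap_mul_self] at this
  exact this.symm

theorem normPerm_mul_le (σ τ : Perm (Fin n)) : normPerm (σ * τ) ≤ normPerm σ + normPerm τ := by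
  induction hm : normPerm τ generalizing σ τ with
  | zero =>
    obtain rfl : τ = 1 := by
      by_contra hτ
      obtain ⟨a, b, h⟩ := exists_normPerm_swap_mul_add_one hτ
      omega
    simp
  | succ m ih =>
    obtain ⟨a, b, h⟩ := exists_normPerm_swap_mul_add_one (σ := τ) (by
      rintro rfl
      simp [normPerm_one] at hm)
    have h1 := ih (σ * swap a b) (swap a b * τ) (by omega)
    rw [mul_assoc, swap_mul_self_mul] at h1
    have h2 := normPerm_mul_swap_le σ a b
    omega

theorem precLe_trans {ρ π : Perm (Fin n)} (h₁ : precLe σ ρ) (h₂ : precLe ρ π) : precLe σ π := by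
  have h₃ := normPerm_mul_le (σ⁻¹ * ρ) (ρ⁻¹ * π)
  have h₄ := normPerm_mul_le σ (σ⁻¹ * π)
  rw [mul_assoc, mul_inv_cancel_left] at h₃
  rw [mul_inv_cancel_left] at h₄
  unfold precLe at *
  omega

end Norm

section Noncrossing

variable {α : Type*} [LinearOrder α] {μ : Perm α}

-- Together these say that the cycles of `μ`, each traversed in increasing order, form a
-- noncrossing partition: Biane's description of the permutations below the long cycle.
def IncreasingCycles (μ : Perm α) : Prop :=
  ∀ a y, μ.SameCycle a y → a < y → a < μ a ∧ μ a ≤ y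

def NoncrossingCycles (μ : Perm α) : Prop :=
  ∀ a b x y, μ.SameCycle a b → μ.SameCycle x y → a < x → x < b → b < y → μ.SameCycle a x

theorem IncreasingCycles.lt_apply_or_apply_le [Finite α] (hμ : IncreasingCycles μ) {z v : α}
    (hzv : μ.SameCycle z v) : z < μ z ∨ μ z ≤ v := by
  by_cases hmax : ∃ w, μ.SameCycle z w ∧ z < w
  · obtain ⟨w, hzw, hlt⟩ := hmax
    exact .inl (hμ z w hzw hlt).1
  push Not at hmax
  obtain ⟨m, hm, hzm⟩ := exists_mem_minReps_rel (SameCycle.equivalence μ) z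
  have hz' : μ.SameCycle z (μ.symm m) := sameCycle_symm_apply_right.mpr hzm
  rcases (hmax _ hz').lt_or_eq with hlt | heq
  · have := (hμ _ z hz'.symm hlt).1
    rw [apply_symm_apply] at this
    exact absurd (hm _ (hzm.symm.trans hz')) this.not_ge
  · rw [← heq, apply_symm_apply]
    exact .inr (hm v (hzm.symm.trans hzv))

variable [Finite α] [DecidableEq α] {a b : α}

theorem IncreasingCycles.mem_Ioc_of_sameCycle_mul_swap_right (hμ : IncreasingCycles μ)
    (hab : a < b) (hsc : μ.SameCycle a b) {z : α} (hz : (μ * swap a b).SameCycle b z) :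
    z ∈ Set.Ioc a b := by
  refine (hz.mem_of_mapsTo (s := {z | μ.SameCycle a z ∧ z ∈ Set.Ioc a b}) ?_
    ⟨hsc, hab, le_rfl⟩).2
  rintro z ⟨haz, hza, hzb⟩
  rcases hzb.lt_or_eq with hzb | hzb
  · have := hμ z b (haz.symm.trans hsc) hzb
    rw [show (μ * swap a b) z = μ z by simp [swap_apply_of_ne_of_ne hza.ne' hzb.ne]]
    exact ⟨sameCycle_apply_right.mpr haz, hza.trans this.1, this.2⟩
  · rw [hzb, show (μ * swap a b) b = μ a by simp]
    exact ⟨SameCycle.rfl.apply_right, hμ a b hsc hab⟩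

theorem IncreasingCycles.notMem_Ioc_of_sameCycle_mul_swap_left (hμ : IncreasingCycles μ)
    (hab : a < b) (hsc : μ.SameCycle a b) {z : α} (hz : (μ * swap a b).SameCycle a z) :
    z ∉ Set.Ioc a b := by
  refine (hz.mem_of_mapsTo (s := {z | μ.SameCycle a z ∧ z ∉ Set.Ioc a b}) ?_
    ⟨.rfl, fun h => h.1.false⟩).2
  rintro z ⟨haz, hz⟩
  refine ⟨sameCycle_apply_right.mpr (haz.trans (hsc.swap_apply_right z)), ?_⟩
  simp only [Set.mem_Ioc, not_and_or, not_lt, not_le] at hz ⊢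
  by_cases hza : z = a
  · subst hza
    rw [show (μ * swap z b) z = μ b by simp]
    rcases hμ.lt_apply_or_apply_le hsc.symm with h | h
    · exact .inr h
    · exact .inl h
  have hzb : z ≠ b := by rintro rfl; rcases hz with h | h <;> order
  rw [show (μ * swap a b) z = μ z by simp [swap_apply_of_ne_of_ne hza hzb]]
  rcases lt_or_gt_of_ne hza with hlt | hlt
  · exact .inl (hμ z a haz.symm hlt).2
  · rcases hμ.lt_apply_or_apply_le haz.symm with h | h
    · exact .inr ((hz.resolve_left hlt.not_ge).trans h)
    · exact .inl h

theorem increasingCycles_noncrossingCycles_mul_swap (hμI : IncreasingCycles μ)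
    (hμN : NoncrossingCycles μ) (hne : a ≠ b) (hsplit : ¬(μ * swap a b).SameCycle a b) :
    IncreasingCycles (μ * swap a b) ∧ NoncrossingCycles (μ * swap a b) := by
  wlog hab : a < b generalizing a b
  · rw [swap_comm] at hsplit ⊢
    exact this hne.symm (fun h => hsplit h.symm) (hne.lt_or_gt.resolve_left hab)
  set π := μ * swap a b
  have hsc : μ.SameCycle a b := by simpa [π] using sameCycle_mul_swap hsplit
  have hsub : ∀ {u v}, π.SameCycle u v → μ.SameCycle u v := hsc.of_mul_swap
  have hB : ∀ {z}, π.SameCycle b z → z ∈ Set.Ioc a b :=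
    hμI.mem_Ioc_of_sameCycle_mul_swap_right hab hsc
  have hA : ∀ {z}, π.SameCycle a z → z ∉ Set.Ioc a b :=
    hμI.notMem_Ioc_of_sameCycle_mul_swap_left hab hsc
  constructor
  · intro u v huv huv'
    by_cases hub : u = b
    · subst hub
      exact absurd (hB huv).2 huv'.not_ge
    by_cases hua : u = a
    · subst hua
      have hbv : b < v := not_le.mp fun h => hA huv ⟨huv', h⟩
      have := hμI b v (hsc.symm.trans (hsub huv)) hbv
      rw [show π u = μ b by simp [π]]
      exact ⟨hab.trans this.1, this.2⟩
    · rw [show π u = μ u by simp [π, swap_apply_of_ne_of_ne hua hub]]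
      exact hμI u v (hsub huv) huv'
  · intro u w x y huw hxy hux hxw hwy
    by_contra hnot
    have hmerge : mergeRel π.SameCycle a b u x := (sameCycle_mul_swap_iff hsplit).mp
      (by rw [mul_swap_mul_self]; exact hμN u w x y (hsub huw) (hsub hxy) hux hxw hwy)
    rcases hmerge with h | ⟨hu | hu, hx | hx⟩
    · exact hnot h
    · exact hnot (hu.trans hx.symm)
    · exact hA (hu.symm.trans huw)
        ⟨(hB hx.symm).1.trans hxw, hwy.le.trans (hB (hx.symm.trans hxy)).2⟩
    · exact hA hx.symm ⟨(hB hu.symm).1.trans hux, hxw.le.trans (hB (hu.symm.trans huw)).2⟩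
    · exact hnot (hu.trans hx.symm)

end Noncrossing

section Descent

variable {n : ℕ}

theorem sameCycle_finRotate (x y : Fin n) : (finRotate n).SameCycle x y := by
  rcases lt_or_ge n 2 with hn | hn
  · obtain rfl : x = y := Fin.ext (by omega)
    exact .rfl
  · have hmov : ∀ z, finRotate n z ≠ z := fun z =>
      mem_support.mp (by simp [support_finRotate_of_le hn])
    exact (isCycle_finRotate_of_le hn).sameCycle (hmov x) (hmov y)

theorem increasingCycles_finRotate : IncreasingCycles (finRotate n) := by
  intro a y _ hay
  cases n with
  | zero => exact a.elim0
  | succ m =>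
    have hval : ((finRotate (m + 1) a : Fin (m + 1)) : ℕ) = a + 1 :=
      coe_finRotate_of_ne_last (Fin.lt_last_iff_ne_last.mp (hay.trans_le (Fin.le_last y)))
    simp only [Fin.lt_def, Fin.le_def, hval] at hay ⊢
    omega

theorem noncrossingCycles_finRotate : NoncrossingCycles (finRotate n) :=
  fun a _ x _ _ _ _ _ _ => sameCycle_finRotate a x

theorem increasingCycles_noncrossingCycles_of_precLe {σ : Perm (Fin n)}
    (h : precLe σ (finRotate n)) : IncreasingCycles σ ∧ NoncrossingCycles σ := by
  induction hm : normPerm (σ⁻¹ * finRotate n) generalizing σ with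
  | zero =>
    obtain rfl : σ = finRotate n := by
      by_contra hσ
      obtain ⟨a, b, h⟩ := exists_normPerm_swap_mul_add_one (mt inv_mul_eq_one.mp hσ)
      omega
    exact ⟨increasingCycles_finRotate, noncrossingCycles_finRotate⟩
  | succ m ih =>
    obtain ⟨a, b, hab⟩ := exists_normPerm_swap_mul_add_one (σ := σ⁻¹ * finRotate n) (by
      rintro h'
      simp [h', normPerm_one] at hm)
    have hinv : (σ * swap a b)⁻¹ * finRotate n = swap a b * (σ⁻¹ * finRotate n) := by
      simp [mul_assoc]
    have hle := normPerm_mul_le (σ * swap a b) ((σ * swap a b)⁻¹ * finRotate n)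
    rw [mul_inv_cancel_left, hinv] at hle
    have hup := normPerm_mul_swap_le σ a b
    have hmerge : ¬σ.SameCycle a b := fun hsc => by
      have := normPerm_mul_swap_le_of_sameCycle hsc
      unfold precLe at h
      omega
    have hne : a ≠ b := by
      rintro rfl
      exact hmerge .rfl
    obtain ⟨hI, hN⟩ := ih (σ := σ * swap a b) (by unfold precLe at *; rw [hinv]; omega)
      (by rw [hinv]; omega)
    simpa using increasingCycles_noncrossingCycles_mul_swap hI hN hne (by simpa using hmerge)

end Descent

section Chain

variable {n k : ℕ}

theorem normPerm_list_prod_le {L : List (Perm (Fin n))} (hL : ∀ σ ∈ L, σ.IsSwap) :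
    normPerm L.prod ≤ L.length := by
  induction L with
  | nil => simp [normPerm_one]
  | cons σ L ih =>
    obtain ⟨a, b, -, rfl⟩ := hL σ List.mem_cons_self
    have h₁ := normPerm_mul_le (swap a b) L.prod
    have h₂ := normPerm_mul_swap_le 1 a b
    have h₃ := ih fun τ hτ => hL τ (List.mem_cons_of_mem _ hτ)
    rw [one_mul, normPerm_one] at h₂
    simp only [List.prod_cons, List.length_cons]
    omega

theorem gammaP_succ (τ : Fin k → Perm (Fin n)) (l : Fin k) :
    gammaP τ (l + 1) = gammaP τ l * τ l := by
  simp [gammaP, List.take_add_one, List.prod_append]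

theorem exists_lt_apply_ne_of_gammaP_apply_ne {τ : Fin k → Perm (Fin n)} {m : ℕ} {x : Fin n}
    (h : gammaP τ m x ≠ x) : ∃ t : Fin k, (t : ℕ) < m ∧ τ t x ≠ x := by
  obtain ⟨σ, hσ, hσx⟩ := exists_mem_apply_ne_of_list_prod_apply_ne h
  obtain ⟨t, ht, rfl⟩ := List.mem_take_iff_getElem.mp hσ
  simp only [List.length_ofFn, lt_min_iff] at ht
  exact ⟨⟨t, ht.2⟩, ht.1, by simpa using hσx⟩

variable {τ : Fin k → Perm (Fin n)}

theorem normPerm_gammaP (hτ : τ ∈ SigmaSet n k) {m : ℕ} (hm : m ≤ k) :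
    normPerm (gammaP τ m) = m := by
  obtain ⟨hswap, hk, -⟩ := hτ
  have hL : ∀ σ ∈ List.ofFn τ, σ.IsSwap := by simpa using hswap
  have h₁ := normPerm_list_prod_le fun σ hσ => hL σ (List.take_subset m _ hσ)
  have h₂ := normPerm_list_prod_le fun σ hσ => hL σ (List.drop_subset m _ hσ)
  have h₃ := normPerm_mul_le (gammaP τ m) ((List.ofFn τ).drop m).prod
  rw [gammaP, List.prod_take_mul_prod_drop, hk] at h₃
  simp only [List.length_take, List.length_drop, List.length_ofFn] at h₁ h₂
  rw [gammaP]
  omega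

theorem gammaP_precLe (hτ : τ ∈ SigmaSet n k) {m : ℕ} (hm : m ≤ k) :
    precLe (gammaP τ m) (finRotate n) := by
  refine precLe_trans ?_ hτ.2.2
  have hdrop : (gammaP τ m)⁻¹ * (List.ofFn τ).prod = ((List.ofFn τ).drop m).prod := by
    rw [inv_mul_eq_iff_eq_mul, gammaP, List.prod_take_mul_prod_drop]
  have h₁ := normPerm_list_prod_le (L := (List.ofFn τ).drop m) fun σ hσ => by
    obtain ⟨t, rfl⟩ := List.mem_ofFn.mp (List.drop_subset m _ hσ)
    exact hτ.1 t
  have h₂ := normPerm_mul_le (gammaP τ m) ((List.ofFn τ).drop m).prod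
  rw [← hdrop, mul_inv_cancel_left] at h₂
  rw [← hdrop] at h₁
  simp only [List.length_drop, List.length_ofFn] at h₁
  unfold precLe
  rw [normPerm_gammaP hτ hm, hτ.2.1] at *
  omega

theorem not_sameCycle_gammaP (hτ : τ ∈ SigmaSet n k) {l : Fin k} {a b : Fin n}
    (hl : τ l = swap a b) : ¬(gammaP τ l).SameCycle a b := fun hsc => by
  have h₁ := normPerm_gammaP hτ l.isLt
  have h₂ := normPerm_gammaP hτ l.isLt.le
  rw [gammaP_succ, hl] at h₁
  have := normPerm_mul_swap_le_of_sameCycle hsc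
  omega

theorem sameCycle_gammaP (hτ : τ ∈ SigmaSet n k) {t : Fin k} {a b : Fin n}
    (ht : τ t = swap a b) {m : ℕ} (htm : (t : ℕ) < m) (hm : m ≤ k) :
    (gammaP τ m).SameCycle a b := by
  induction m with
  | zero => omega
  | succ m ih =>
    have hsucc : gammaP τ (m + 1) = gammaP τ m * τ ⟨m, hm⟩ := gammaP_succ τ ⟨m, hm⟩
    rcases eq_or_ne t ⟨m, hm⟩ with rfl | htm'
    · rw [hsucc, ht]
      exact sameCycle_mul_swap (not_sameCycle_gammaP hτ ht)
    · obtain ⟨a', b', -, hl⟩ := hτ.1 ⟨m, hm⟩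
      have htm'' : (t : ℕ) < m := (Nat.lt_succ_iff.mp htm).lt_of_ne fun h => htm' (Fin.ext h)
      rw [hsucc, hl]
      exact (sameCycle_mul_swap_iff (not_sameCycle_gammaP hτ hl)).mpr (.inl (ih htm'' (by omega)))

end Chain

section FirstPoint

variable {α : Type*} [LinearOrder α] [Finite α] [DecidableEq α] {δ : Perm α} {a b : α}

theorem le_of_sameCycle_mul_swap (hsplit : ¬δ.SameCycle a b) (hδ : IncreasingCycles δ)
    (hγI : IncreasingCycles (δ * swap a b)) (hγN : NoncrossingCycles (δ * swap a b))
    (hmin : ∀ y, δ y ≠ y → a < y → ∃ w < y, δ.SameCycle w y)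
    {w x : α} (hwa : w ≤ a) (hax : a < x) (hwx : (δ * swap a b).SameCycle w x) : b ≤ x := by
  by_contra! hxb
  by_cases haw : (δ * swap a b).SameCycle a w
  · have hy := hγI a x (haw.trans hwx) hax
    rw [show (δ * swap a b) a = δ b by simp] at hy
    -- `δ b < b`, so `b` is the top of its `δ`-cycle and `δ b` the bottom
    have hbot : ∀ v, δ.SameCycle b v → δ b ≤ v := fun v hv =>
      (hδ.lt_apply_or_apply_le hv).resolve_left (by order)
    have hmov : δ (δ b) ≠ δ b := fun h => by
      have : b = δ b := SameCycle.rfl.apply_right.eq_of_right h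
      order
    obtain ⟨w', hw', hw'b⟩ := hmin (δ b) hmov hy.1
    exact (hbot w' (SameCycle.rfl.apply_right.trans hw'b.symm)).not_gt hw'
  · have hwa' : w < a := hwa.lt_of_ne fun h => haw (h ▸ .rfl)
    exact haw (hγN w x a b hwx (sameCycle_mul_swap hsplit) hwa' hax hxb).symm

end FirstPoint

/-- For a non-decreasing path γ = ((i₁ j₁),…,(i_k j_k)) ∈ Σ*_n(k) and l ∈ {1,…,k}, j_l is the
minimum of {x ∈ supp(γ_l) : x > i_l}: it lies in this set and bounds it below. -/
theorem stmt15 (n k : ℕ) (i j : Fin k → Fin n) (hij : ∀ l, i l < j l)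
    (hmono : Monotone i)
    (hγ : (fun l => Equiv.swap (i l) (j l)) ∈ SigmaSet n k) (l : Fin k) :
    i l < j l ∧
    gammaP (fun m => Equiv.swap (i m) (j m)) ((l : ℕ) + 1) (j l) ≠ j l ∧
    ∀ x, gammaP (fun m => Equiv.swap (i m) (j m)) ((l : ℕ) + 1) x ≠ x → i l < x →
      j l ≤ x := by
  set τ : Fin k → Perm (Fin n) := fun m => swap (i m) (j m)
  have hsupp : ∀ {m y}, gammaP τ m y ≠ y → ∃ t : Fin k, (t : ℕ) < m ∧ (y = i t ∨ y = j t) :=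
    fun h => by
      obtain ⟨t, ht, hy⟩ := exists_lt_apply_ne_of_gammaP_apply_ne h
      exact ⟨t, ht, (swap_apply_ne_self_iff.mp hy).2⟩
  have hsplit : ¬(gammaP τ l).SameCycle (i l) (j l) := not_sameCycle_gammaP hγ rfl
  obtain ⟨hδI, -⟩ := increasingCycles_noncrossingCycles_of_precLe (gammaP_precLe hγ l.isLt.le)
  obtain ⟨hγI, hγN⟩ := increasingCycles_noncrossingCycles_of_precLe (gammaP_precLe hγ l.isLt)
  have hstep : gammaP τ (l + 1) = gammaP τ l * swap (i l) (j l) := gammaP_succ τ l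
  refine ⟨hij l, fun h => hsplit ?_, fun x hx hlx => ?_⟩
  · rw [hstep, mul_apply, swap_apply_right] at h
    exact h ▸ SameCycle.rfl.apply_right
  obtain ⟨t, ht, rfl | rfl⟩ := hsupp hx
  · exact absurd (hmono (Fin.le_iff_val_le_val.mpr (by omega))) hlx.not_ge
  rw [hstep] at hγI hγN
  refine le_of_sameCycle_mul_swap hsplit hδI hγI hγN (fun y hy hly => ?_)
    (hmono (Fin.le_iff_val_le_val.mpr (by omega))) hlx (hstep ▸ sameCycle_gammaP hγ rfl ht l.isLt)
  obtain ⟨t', ht', rfl | rfl⟩ := hsupp hy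
  · exact absurd (hmono (Fin.le_iff_val_le_val.mpr ht'.le)) hly.not_ge
  · exact ⟨i t', hij t', sameCycle_gammaP hγ rfl ht' l.isLt.le⟩
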